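/- Let M be an internally 4-connected binary matroid in which every element is in exactly three triangles and whose ground set has at least 14 elements, and suppose M has no 4-element cocircuit. Let (X, Y) be an exact 4-separation of M with X ⊆ fcl(Y). Then X is coindependent (that is, independent in the dual matroid M*), the rank of X is 3, and X is contained in the closure of Y. -/

import Mathlib

/-!
The heart of the matter is that `Y` spans `M`: the three conclusions then follow from
`r(X) + r(Y) = r(M) + 3` and `X = E - Y`.

Being 3-connected, `M` is simple and of finite rank, so a binary representation `φ` is injective
on `E` and `E` is finite. The vectors of a triangle sum to zero and every element lies in three
triangles, so `∑ e ∈ E, φ e = 0`; hence every cocircuit is even. The three triangles through an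
element of a cocircuit `K` meet `K` in three further distinct elements, and as there is no
4-element cocircuit, `|K| ≥ 6`.

If `Y` did not span, climb from `cl(Y)`: since `fcl(Y) = E`, a flat `Z ⊇ Y` other than `E` is not
coclosed, and adding some `x ∈ cl*(Z) - Z` and closing does not increase `r(Z) + r(E - Z)`. This
yields a hyperplane `Z ⊇ Y` with `λ(Z) ≤ 3` and `x ∈ cl*(Z) - Z`. Then `E - Z - x` has rank at
most 3 and its vectors avoid `span φ(Z)` while all being congruent to `φ x` modulo it; a binary
space of dimension 3 holds at most four such vectors, so `|E - Z| ≤ 5`, although `E - Z` contains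
a cocircuit.
-/

open Set Matroid

namespace Paper

variable {α : Type*}

/-- A circuit of a matroid: a minimal dependent set. -/
def Circuit (M : Matroid α) (C : Set α) : Prop :=
  C ⊆ M.E ∧ ¬ M.Indep C ∧ ∀ D, D ⊂ C → M.Indep D

/-- A cocircuit: a circuit of the dual matroid. -/
def Cocircuit (M : Matroid α) (C : Set α) : Prop := Circuit M✶ C

/-- A triangle: a 3-element circuit. -/
def IsTriangle (M : Matroid α) (T : Set α) : Prop := Circuit M T ∧ T.encard = 3

/-- A triad: a 3-element cocircuit. -/
def IsTriad (M : Matroid α) (T : Set α) : Prop := Cocircuit M T ∧ T.encard = 3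

/-- The (extended) rank of a set: the supremum of the cardinalities of
independent subsets. -/
noncomputable def eRank (M : Matroid α) (X : Set α) : ℕ∞ :=
  ⨆ I ∈ {I : Set α | M.Indep I ∧ I ⊆ X}, I.encard

/-- The rank of the matroid. -/
noncomputable def eRk (M : Matroid α) : ℕ∞ := eRank M M.E

/-- `(X, Y)` is a `k`-separation of `M`: a partition of the ground set into
two sets, each of size at least `k`, with `λ(X) = r(X) + r(Y) - r(M) ≤ k - 1`. -/
def IsKSeparation (M : Matroid α) (k : ℕ) (X Y : Set α) : Prop :=
  Disjoint X Y ∧ X ∪ Y = M.E ∧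
    eRank M X + eRank M Y ≤ eRk M + ((k - 1 : ℕ) : ℕ∞) ∧
    (k : ℕ∞) ≤ X.encard ∧ (k : ℕ∞) ≤ Y.encard

/-- `M` is `n`-connected if it has no `k`-separation for any positive `k < n`. -/
def NConnected (M : Matroid α) (n : ℕ) : Prop :=
  ∀ k, 1 ≤ k → k < n → ∀ X Y, ¬ IsKSeparation M k X Y

/-- `M` is internally 4-connected if it is 3-connected and every
3-separation has a side that is a triangle or a triad. -/
def InternallyFourConnected (M : Matroid α) : Prop :=
  NConnected M 3 ∧ ∀ X Y, IsKSeparation M 3 X Y →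
    IsTriangle M X ∨ IsTriad M X ∨ IsTriangle M Y ∨ IsTriad M Y

/-- `M` is binary: representable over `GF(2)`. -/
def Binary (M : Matroid α) : Prop :=
  ∃ φ : α → (α →₀ ZMod 2), ∀ I, I ⊆ M.E →
    (M.Indep I ↔ LinearIndependent (ZMod 2) (fun x : I => φ x.1))

/-- Every element of `M` is in exactly three triangles. -/
def EveryElementInThreeTriangles (M : Matroid α) : Prop :=
  ∀ e ∈ M.E, {T : Set α | IsTriangle M T ∧ e ∈ T}.encard = 3

/-- Deletion of a set of elements. -/
def delete (M : Matroid α) (D : Set α) : Matroid α := M ↾ (M.E \ D)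

/-- Contraction of a set of elements. -/
def contract (M : Matroid α) (C : Set α) : Matroid α := (delete M✶ C)✶

/-- A nonloop. -/
def Nonloop (M : Matroid α) (e : α) : Prop := M.Indep {e}

/-- `N` is a simplification of `M`: the restriction of `M` to a set of
nonloops containing exactly one element from each parallel class. -/
def IsSimplificationOf (N M : Matroid α) : Prop :=
  ∃ S, S ⊆ M.E ∧ N = M ↾ S ∧ (∀ e ∈ S, Nonloop M e) ∧
    ∀ f, Nonloop M f → ∃! e, e ∈ S ∧ M.closure {e} = M.closure {f}

/-- `si(M/e)` is internally 4-connected. -/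
def SiContractI4C (M : Matroid α) (e : α) : Prop :=
  ∀ N, IsSimplificationOf N (contract M {e}) → InternallyFourConnected N

/-- A set is fully closed if it is closed in `M` and in `M✶`. -/
def FullyClosed (M : Matroid α) (F : Set α) : Prop :=
  M.closure F = F ∧ M✶.closure F = F

/-- The full closure of a set: the intersection of all fully closed sets
containing it. -/
def fcl (M : Matroid α) (Z : Set α) : Set α := ⋂₀ {F | Z ⊆ F ∧ FullyClosed M F}

/-- An exact 4-separation: a 4-separation with `λ = 3`. -/
def IsExact4Separation (M : Matroid α) (X Y : Set α) : Prop :=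
  Disjoint X Y ∧ X ∪ Y = M.E ∧
    eRank M X + eRank M Y = eRk M + 3 ∧
    (4 : ℕ∞) ≤ X.encard ∧ (4 : ℕ∞) ≤ Y.encard


open Submodule

lemma eRank_eq_eRk (M : Matroid α) (X : Set α) : eRank M X = M.eRk X := by
  obtain ⟨I, hI⟩ := M.exists_isBasis' X
  refine le_antisymm (iSup₂_le fun J hJ ↦ hJ.1.encard_le_eRk_of_subset hJ.2) ?_
  rw [hI.eRk_eq_encard]
  exact le_iSup₂ (f := fun I (_ : I ∈ {I | M.Indep I ∧ I ⊆ X}) ↦ I.encard) I ⟨hI.indep, hI.subset⟩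

lemma eRk_eq_matroid_eRank (M : Matroid α) : eRk M = M.eRank := by
  rw [eRk, eRank_eq_eRk, eRk_ground]

lemma circuit_iff_isCircuit {M : Matroid α} {C : Set α} : Circuit M C ↔ M.IsCircuit C := by
  rw [isCircuit_iff_forall_ssubset, Dep, Circuit]
  exact ⟨fun ⟨hE, hC, h⟩ ↦ ⟨⟨hC, hE⟩, fun I hI ↦ h I hI⟩,
    fun ⟨⟨hC, hE⟩, h⟩ ↦ ⟨hE, hC, fun I hI ↦ h hI⟩⟩

lemma cocircuit_iff_isCocircuit {M : Matroid α} {C : Set α} : Cocircuit M C ↔ M.IsCocircuit C :=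
  circuit_iff_isCircuit

section Connectivity

variable {M : Matroid α} {X : Set α} {e f : α}

lemma NConnected.eRank_add_one_lt (hM : NConnected M 3) (hX : X ⊆ M.E) (h2X : 2 ≤ X.encard)
    (h2X' : 2 ≤ (M.E \ X).encard) : M.eRank + 1 < M.eRk X + M.eRk (M.E \ X) := by
  by_contra! h
  refine hM 2 (by norm_num) (by norm_num) X (M.E \ X)
    ⟨disjoint_sdiff_right, union_sdiff_cancel hX, ?_, h2X, h2X'⟩
  simpa [eRank_eq_eRk, eRk_eq_matroid_eRank] using h

lemma NConnected.rankFinite (hM : NConnected M 3) (hX : X ⊆ M.E) (h2X : 2 ≤ X.encard)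
    (h2X' : 2 ≤ (M.E \ X).encard) : M.RankFinite := by
  rw [← eRank_ne_top_iff]
  intro htop
  simpa [htop] using hM.eRank_add_one_lt hX h2X h2X'

lemma NConnected.indep_pair (hM : NConnected M 3) (hE : 4 ≤ M.E.encard) (he : e ∈ M.E)
    (hf : f ∈ M.E) (hef : e ≠ f) : M.Indep {e, f} := by
  have hpair : ({e, f} : Set α) ⊆ M.E := pair_subset he hf
  have h2 : ({e, f} : Set α).encard = 2 := encard_pair hef
  by_contra hdep
  have hlt : M.eRk {e, f} < 2 :=
    h2 ▸ M.eRk_lt_encard_of_dep_of_finite (toFinite _) ⟨hdep, hpair⟩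
  have hcompl : 2 ≤ (M.E \ {e, f}).encard := by
    have hsum := encard_sdiff_add_encard_of_subset hpair
    rw [h2] at hsum
    exact (ENat.add_le_add_iff_right (by norm_num)).1 (hsum ▸ le_trans (by norm_num) hE)
  have := hM.eRank_add_one_lt hpair h2.ge hcompl
  have hle : M.eRk {e, f} + M.eRk (M.E \ {e, f}) ≤ 1 + M.eRank :=
    add_le_add (Order.le_of_lt_add_one hlt) (M.eRk_le_eRank _)
  exact (this.trans_le hle).ne (add_comm _ _)

end Connectivity

section Coclosure

variable {M : Matroid α} {K Z X : Set α} {x : α}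

lemma _root_.Matroid.IsCocircuit.closure_insert_compl (hK : M.IsCocircuit K) (hx : x ∈ K) :
    M.closure (insert x (M.E \ K)) = M.E := by
  have hco : M.Coindep (K \ {x}) := hK.isCircuit.sdiff_singleton_indep hx
  refine Eq.trans (congrArg M.closure ?_) hco.closure_compl
  ext y
  have := hK.subset_ground hx
  by_cases hyx : y = x <;> simp_all

lemma _root_.Matroid.IsCocircuit.notMem_closure_compl (hK : M.IsCocircuit K) (hx : x ∈ K) :
    x ∉ M.closure (M.E \ K) := by
  intro hxK
  apply (isCocircuit_iff_minimal_compl_nonspanning.1 hK).prop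
  rw [spanning_iff_closure_eq, ← closure_insert_eq_of_mem_closure hxK,
    hK.closure_insert_compl hx]

lemma _root_.Matroid.notMem_closure_compl_insert_of_mem_dual_closure (hx : x ∈ M✶.closure Z)
    (hxZ : x ∉ Z) : x ∉ M.closure (M.E \ insert x Z) := by
  obtain ⟨C, hCZ, hC, hxC⟩ := exists_isCircuit_of_mem_closure hx hxZ
  exact fun h ↦ (show M.IsCocircuit C from hC).notMem_closure_compl hxC
    (M.closure_subset_closure (sdiff_subset_sdiff_right hCZ) h)

lemma _root_.Matroid.eRk_closure_add_eRk_compl_le (hX : X ⊆ M.E) :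
    M.eRk (M.closure X) + M.eRk (M.E \ M.closure X) ≤ M.eRk X + M.eRk (M.E \ X) := by
  rw [eRk_closure_eq]
  exact add_le_add_right (M.eRk_mono (sdiff_subset_sdiff_right (M.subset_closure X hX))) _

lemma _root_.Matroid.eRk_insert_add_eRk_compl_le (hx : x ∈ M✶.closure Z) (hxZ : x ∉ Z) :
    M.eRk (insert x Z) + M.eRk (M.E \ insert x Z) ≤ M.eRk Z + M.eRk (M.E \ Z) := by
  have hxE : x ∈ M.E := M✶.closure_subset_ground Z hx
  have hcompl : M.E \ Z = insert x (M.E \ insert x Z) := by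
    ext y
    by_cases hyx : y = x <;> simp_all
  rw [hcompl, eRk_insert_eq_add_one ⟨hxE, notMem_closure_compl_insert_of_mem_dual_closure hx hxZ⟩,
    ← add_assoc, add_right_comm]
  exact add_le_add_left (M.eRk_insert_le_add_one x Z) _

end Coclosure

lemma exists_eq_triple_of_encard_eq_three {T : Set α} {e p : α} (hT : T.encard = 3) (he : e ∈ T)
    (hp : p ∈ T) (hep : e ≠ p) : ∃ t, e ≠ t ∧ p ≠ t ∧ T = {e, p, t} := by
  have hsub : ({e, p} : Set α) ⊆ T := pair_subset he hp
  have hsum := encard_sdiff_add_encard_of_subset hsub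
  rw [encard_pair hep, hT] at hsum
  obtain ⟨t, ht⟩ := encard_eq_one.1
    (WithTop.add_right_cancel (by norm_num : (2 : ℕ∞) ≠ ⊤) (hsum.trans rfl))
  have htT : t ∈ T \ {e, p} := ht ▸ mem_singleton t
  refine ⟨t, fun h ↦ htT.2 (by simp [h]), fun h ↦ htT.2 (by simp [h]), ?_⟩
  rw [← sdiff_union_of_subset hsub, ht]
  ext
  simp only [mem_union, mem_singleton_iff, mem_insert_iff]
  tauto


lemma exists_isFlat_closure_insert_eq_ground {M : Matroid α} {Y : Set α} {c : ℕ∞}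
    [M.Finite] (hY : Y ⊆ M.E) (hYc : M.eRk Y + M.eRk (M.E \ Y) ≤ c)
    (hYsp : M.closure Y ≠ M.E) (hfcl : M.E ⊆ fcl M Y) :
    ∃ Z x, M.IsFlat Z ∧ x ∈ M✶.closure Z \ Z ∧ M.closure (insert x Z) = M.E ∧
      M.eRk Z + M.eRk (M.E \ Z) ≤ c := by
  set 𝓕 := {Z | M.IsFlat Z ∧ Y ⊆ Z ∧ Z ≠ M.E ∧ M.eRk Z + M.eRk (M.E \ Z) ≤ c}
  have h𝓕 : 𝓕.Finite := M.ground_finite.finite_subsets.subset fun Z hZ ↦ hZ.1.subset_ground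
  obtain ⟨Z, hmax⟩ := h𝓕.exists_maximal
    ⟨M.closure Y, isFlat_closure Y, M.subset_closure Y hY, hYsp,
      (eRk_closure_add_eRk_compl_le hY).trans hYc⟩
  obtain ⟨hZ, hYZ, hZE, hZc⟩ := hmax.prop
  obtain ⟨x, hx, hxZ⟩ : ∃ x ∈ M✶.closure Z, x ∉ Z := by
    by_contra! h
    refine hZE (hZ.subset_ground.antisymm (hfcl.trans (sInter_subset_of_mem ⟨hYZ, hZ.closure, ?_⟩)))
    exact Subset.antisymm h (M✶.subset_closure Z hZ.subset_ground)
  have hxE : x ∈ M.E := M✶.closure_subset_ground Z hx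
  refine ⟨Z, x, hZ, ⟨hx, hxZ⟩, by_contra fun hne ↦ hxZ ?_, hZc⟩
  have hZx : Z ⊆ M.closure (insert x Z) :=
    (subset_insert x Z).trans (M.subset_closure _ (insert_subset hxE hZ.subset_ground))
  have hmem : M.closure (insert x Z) ∈ 𝓕 := ⟨isFlat_closure _, hYZ.trans hZx, hne,
    ((eRk_closure_add_eRk_compl_le (insert_subset hxE hZ.subset_ground)).trans
      (eRk_insert_add_eRk_compl_le hx hxZ)).trans hZc⟩
  rw [hmax.eq_of_subset hmem hZx]
  exact M.subset_closure _ (insert_subset hxE hZ.subset_ground) (mem_insert x Z)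

section ZModTwo

variable {V : Type*} [AddCommGroup V] [Module (ZMod 2) V] {s : Set V} {v w : V}

lemma zmod_two_eq_zero_or_eq_one (c : ZMod 2) : c = 0 ∨ c = 1 := by
  revert c
  decide

lemma mem_span_or_sub_mem_span_of_mem_span_insert (h : v ∈ span (ZMod 2) (insert w s)) :
    v ∈ span (ZMod 2) s ∨ v - w ∈ span (ZMod 2) s := by
  obtain ⟨c, z, hz, rfl⟩ := mem_span_insert.1 h
  obtain rfl | rfl := zmod_two_eq_zero_or_eq_one c
  · left; simpa using hz
  · right; simpa using hz

lemma encard_span_le_two_pow (hs : s.Finite) :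
    (span (ZMod 2) s : Set V).encard ≤ 2 ^ s.ncard := by
  induction s, hs using Set.Finite.induction_on with
  | empty => simp
  | @insert a s has hs ih =>
    have hsub : (span (ZMod 2) (insert a s) : Set V) ⊆
        span (ZMod 2) s ∪ (a + ·) '' span (ZMod 2) s := by
      intro v hv
      refine (mem_span_or_sub_mem_span_of_mem_span_insert hv).imp id fun h ↦ ⟨v - a, h, ?_⟩
      simp
    calc (span (ZMod 2) (insert a s) : Set V).encard
        ≤ (span (ZMod 2) s : Set V).encard + ((a + ·) '' span (ZMod 2) s).encard :=
          (encard_mono hsub).trans (encard_union_le _ _)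
      _ ≤ 2 ^ s.ncard + 2 ^ s.ncard := add_le_add ih ((encard_image_le _ _).trans ih)
      _ = 2 ^ (insert a s).ncard := by rw [ncard_insert_of_notMem has hs, pow_succ, mul_two]

end ZModTwo

lemma two_mul_encard_le_of_sub_mem {R V : Type*} [Ring R] [AddCommGroup V] [Module R V]
    {U S : Submodule R V} {D : Set V} (hDU : D ⊆ U) (hDS : ∀ d ∈ D, d ∉ S)
    (hD : ∀ a ∈ D, ∀ b ∈ D, a - b ∈ S) : 2 * D.encard ≤ (U : Set V).encard := by
  rcases D.eq_empty_or_nonempty with rfl | ⟨d₀, hd₀⟩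
  · simp
  have hinj : InjOn (· - d₀) D := fun a _ b _ h ↦ sub_left_injective h
  have hdisj : Disjoint D ((· - d₀) '' D) := by
    rw [disjoint_right]
    rintro - ⟨a, ha, rfl⟩ had
    exact hDS _ had (hD a ha d₀ hd₀)
  have hsub : D ∪ (· - d₀) '' D ⊆ U := by
    refine union_subset hDU ?_
    rintro - ⟨a, ha, rfl⟩
    exact sub_mem (hDU ha) (hDU hd₀)
  calc 2 * D.encard = D.encard + ((· - d₀) '' D).encard := by rw [two_mul, hinj.encard_image]
    _ = (D ∪ (· - d₀) '' D).encard := (encard_union_eq hdisj).symm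
    _ ≤ (U : Set V).encard := encard_mono hsub

def IsRep (K : Type*) {V : Type*} [Semiring K] [AddCommMonoid V] [Module K V]
    (M : Matroid α) (φ : α → V) : Prop :=
  ∀ I, I ⊆ M.E → (M.Indep I ↔ LinearIndepOn K φ I)

namespace IsRep

section DivisionRing

variable {K V : Type*} [DivisionRing K] [AddCommGroup V] [Module K V]
  {M : Matroid α} {φ : α → V} {I S : Set α} {e : α}

lemma mem_closure_iff_of_indep (hφ : IsRep K M φ) (hI : M.Indep I) (he : e ∈ M.E) :
    e ∈ M.closure I ↔ φ e ∈ span K (φ '' I) := by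
  by_cases heI : e ∈ I
  · exact iff_of_true (M.mem_closure_of_mem' heI) (subset_span (mem_image_of_mem φ heI))
  have h := hI.insert_indep_iff_of_notMem heI
  rw [hφ _ (insert_subset he hI.subset_ground), linearIndepOn_insert heI,
    and_iff_right ((hφ I hI.subset_ground).1 hI), mem_sdiff, and_iff_right he] at h
  exact (not_iff_not.1 h).symm

lemma mem_closure_iff (hφ : IsRep K M φ) (hS : S ⊆ M.E) (he : e ∈ M.E) :
    e ∈ M.closure S ↔ φ e ∈ span K (φ '' S) := by
  obtain ⟨I, hI⟩ := M.exists_isBasis S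
  have hspan : span K (φ '' S) = span K (φ '' I) := by
    refine le_antisymm (span_le.2 ?_) (span_mono (image_mono hI.subset))
    rintro - ⟨s, hs, rfl⟩
    exact (hφ.mem_closure_iff_of_indep hI.indep (hS hs)).1 (hI.subset_closure hs)
  rw [← hI.closure_eq_closure, hspan, hφ.mem_closure_iff_of_indep hI.indep he]

lemma injOn (hφ : IsRep K M φ) (h : ∀ e ∈ M.E, ∀ f ∈ M.E, e ≠ f → M.Indep {e, f}) :
    InjOn φ M.E := by
  intro e he f hf hef
  by_contra hne
  exact hne (((hφ _ (pair_subset he hf)).1 (h e he f hf hne)).injOn (by simp) (by simp) hef)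

end DivisionRing

section Binary

variable {V : Type*} [AddCommGroup V] [Module (ZMod 2) V] {M : Matroid α} {φ : α → V}
  {D H K T₁ T₂ Y Z : Set α} {e p x y : α}

lemma eq_add_of_isCircuit (hφ : IsRep (ZMod 2) M φ) {a b c : α} (hC : M.IsCircuit {a, b, c})
    (hab : a ≠ b) (hac : a ≠ c) (hbc : b ≠ c) : φ c = φ a + φ b := by
  have hcE : c ∈ M.E := hC.subset_ground (by simp)
  have hnot : ∀ d, M.Indep {d, c} → d ≠ c → φ c ∉ span (ZMod 2) {φ d} := by
    intro d hind hdc h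
    have hd : {d} ⊆ M.E := singleton_subset_iff.2 (hind.subset_ground (mem_insert d _))
    refine hind.notMem_closure_sdiff_of_mem (mem_insert_of_mem d rfl) ?_
    rwa [pair_sdiff_right hdc, hφ.mem_closure_iff hd hcE, image_singleton]
  have hca := hnot a (hC.ssubset_indep ((ssubset_iff_of_subset (by simp [insert_subset_iff])).2
    ⟨b, by simp, by simp [hab.symm, hbc]⟩)) hac
  have hcb := hnot b (hC.ssubset_indep ((ssubset_iff_of_subset (by simp)).2
    ⟨a, by simp, by simp [hab, hac]⟩)) hbc
  have hspan := hC.mem_closure_sdiff_singleton_of_mem (e := c) (by simp)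
  rw [hφ.mem_closure_iff (sdiff_subset.trans hC.subset_ground) hcE,
    show ({a, b, c} : Set α) \ {c} = {a, b} by ext; simp; grind, image_pair] at hspan
  obtain ⟨r, hr⟩ := mem_span_singleton.1
    ((mem_span_or_sub_mem_span_of_mem_span_insert hspan).resolve_left hcb)
  obtain rfl | rfl := zmod_two_eq_zero_or_eq_one r
  · rw [zero_smul, eq_comm, sub_eq_zero] at hr
    rw [hr] at hca
    exact (hca (mem_span_singleton_self _)).elim
  · rw [one_smul, eq_sub_iff_add_eq] at hr
    rw [← hr, add_comm]

lemma eq_of_isTriangle (hφ : IsRep (ZMod 2) M φ) (hinj : InjOn φ M.E) (hT₁ : IsTriangle M T₁)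
    (hT₂ : IsTriangle M T₂) (he₁ : e ∈ T₁) (hp₁ : p ∈ T₁) (he₂ : e ∈ T₂) (hp₂ : p ∈ T₂)
    (hep : e ≠ p) : T₁ = T₂ := by
  obtain ⟨t₁, het₁, hpt₁, rfl⟩ := exists_eq_triple_of_encard_eq_three hT₁.2 he₁ hp₁ hep
  obtain ⟨t₂, het₂, hpt₂, rfl⟩ := exists_eq_triple_of_encard_eq_three hT₂.2 he₂ hp₂ hep
  have h₁ := circuit_iff_isCircuit.1 hT₁.1
  have h₂ := circuit_iff_isCircuit.1 hT₂.1
  rw [hinj (h₁.subset_ground (by simp)) (h₂.subset_ground (by simp))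
    ((hφ.eq_add_of_isCircuit h₁ hep het₁ hpt₁).trans
      (hφ.eq_add_of_isCircuit h₂ hep het₂ hpt₂).symm)]

lemma finite_ground [M.RankFinite] (hφ : IsRep (ZMod 2) M φ) (hinj : InjOn φ M.E) :
    M.E.Finite := by
  obtain ⟨B, hB⟩ := M.exists_isBase
  have hsub : φ '' M.E ⊆ span (ZMod 2) (φ '' B) := by
    rintro - ⟨e, he, rfl⟩
    exact (hφ.mem_closure_iff hB.subset_ground he).1 (hB.closure_eq ▸ he)
  refine Finite.of_finite_image (Finite.subset ?_ hsub) hinj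
  exact finite_of_encard_le_coe (k := 2 ^ _)
    (by exact_mod_cast encard_span_le_two_pow (hB.finite.image φ))

lemma two_mul_encard_le_two_pow (hφ : IsRep (ZMod 2) M φ) (hinj : InjOn φ M.E) {n : ℕ}
    (hH : H ⊆ M.E) (hx : x ∈ M.E) (hD : D ⊆ M.closure (insert x H)) (hDH : Disjoint D (M.closure H))
    (hn : M.eRk D ≤ n) : 2 * D.encard ≤ 2 ^ n := by
  have hDE : D ⊆ M.E := hD.trans (M.closure_subset_ground _)
  obtain ⟨B, hB⟩ := M.exists_isBasis D
  have hBfin : B.Finite := finite_of_encard_le_coe (hB.encard_eq_eRk ▸ hn)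
  have hBn : (φ '' B).ncard ≤ n := by
    refine (ncard_image_le hBfin).trans ?_
    rw [← ENat.natCast_le_natCast, hBfin.cast_ncard_eq, hB.encard_eq_eRk]
    exact hn
  have hnotin : ∀ d ∈ D, φ d ∉ span (ZMod 2) (φ '' H) := fun d hd h ↦
    disjoint_left.1 hDH hd ((hφ.mem_closure_iff hH (hDE hd)).2 h)
  have hsub : ∀ d ∈ D, φ d - φ x ∈ span (ZMod 2) (φ '' H) := by
    intro d hd
    have hdx := (hφ.mem_closure_iff (insert_subset hx hH) (hDE hd)).1 (hD hd)
    rw [image_insert_eq] at hdx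
    exact (mem_span_or_sub_mem_span_of_mem_span_insert hdx).resolve_left (hnotin d hd)
  have hcount := two_mul_encard_le_of_sub_mem (U := span (ZMod 2) (φ '' B)) (D := φ '' D)
    (by rintro - ⟨d, hd, rfl⟩
        exact (hφ.mem_closure_iff hB.indep.subset_ground (hDE hd)).1 (hB.subset_closure hd))
    (by rintro - ⟨d, hd, rfl⟩; exact hnotin d hd)
    (by rintro - ⟨a, ha, rfl⟩ - ⟨b, hb, rfl⟩; simpa using sub_mem (hsub a ha) (hsub b hb))
  rw [(hinj.mono hDE).encard_image] at hcount
  exact hcount.trans ((encard_span_le_two_pow (hBfin.image φ)).trans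
    (pow_le_pow_right₀ (by norm_num) (by exact_mod_cast hBn)))

lemma sub_mem_span_compl (hφ : IsRep (ZMod 2) M φ) (hK : M.IsCocircuit K) (hx : x ∈ K)
    (hy : y ∈ K) : φ y - φ x ∈ span (ZMod 2) (φ '' (M.E \ K)) := by
  have hKE := hK.subset_ground
  have hy' : y ∈ M.closure (insert x (M.E \ K)) := by
    rw [hK.closure_insert_compl hx]
    exact hKE hy
  rw [hφ.mem_closure_iff (insert_subset (hKE hx) sdiff_subset) (hKE hy), image_insert_eq] at hy'
  exact (mem_span_or_sub_mem_span_of_mem_span_insert hy').resolve_left fun h ↦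
    hK.notMem_closure_compl hy ((hφ.mem_closure_iff sdiff_subset (hKE hy)).2 h)

lemma sum_ground_eq_zero [M.Finite] (hφ : IsRep (ZMod 2) M φ) (h3 : EveryElementInThreeTriangles M) :
    ∑ e ∈ M.ground_finite.toFinset, φ e = 0 := by
  classical
  set E := M.ground_finite.toFinset
  have h𝒯 : {T | IsTriangle M T}.Finite :=
    M.ground_finite.finite_subsets.subset fun T hT ↦ hT.1.1
  have htri : ∀ T ∈ h𝒯.toFinset, ∑ e ∈ E with e ∈ T, φ e = 0 := by
    intro T hT
    obtain ⟨hC, hT3⟩ := h𝒯.mem_toFinset.1 hT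
    obtain ⟨a, b, c, hab, hac, hbc, rfl⟩ := encard_eq_three.1 hT3
    replace hC := circuit_iff_isCircuit.1 hC
    trans ∑ e ∈ {a, b, c}, φ e
    · congr 1
      ext e
      simp only [Finset.mem_filter, Finite.mem_toFinset, E, Finset.mem_insert,
        Finset.mem_singleton, Set.mem_insert_iff, Set.mem_singleton_iff]
      exact ⟨fun h ↦ h.2, fun h ↦ ⟨hC.subset_ground h, h⟩⟩
    rw [Finset.sum_insert (by simp [hab, hac]), Finset.sum_pair hbc,
      hφ.eq_add_of_isCircuit hC hab hac hbc, ← add_assoc, ZModModule.add_self]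
  have hcount : ∀ e ∈ E, ({T ∈ h𝒯.toFinset | e ∈ T} : Finset (Set α)).card = 3 := by
    intro e he
    have hset : (({T ∈ h𝒯.toFinset | e ∈ T} : Finset (Set α)) : Set (Set α)) =
        {T | IsTriangle M T ∧ e ∈ T} := by
      ext
      simp
    have h3e := h3 e (M.ground_finite.mem_toFinset.1 he)
    rw [← hset, encard_coe_eq_coe_finsetCard] at h3e
    exact_mod_cast h3e
  calc ∑ e ∈ E, φ e = ∑ e ∈ E, ∑ T ∈ h𝒯.toFinset with e ∈ T, φ e := by
        refine Finset.sum_congr rfl fun e he ↦ ?_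
        rw [Finset.sum_const, hcount e he, show 3 = 2 + 1 from rfl, succ_nsmul,
          ZModModule.char_nsmul_eq_zero, zero_add]
    _ = ∑ T ∈ h𝒯.toFinset, ∑ e ∈ E with e ∈ T, φ e :=
        Finset.sum_comm' fun e T ↦ by simp only [Finset.mem_filter]; tauto
    _ = 0 := Finset.sum_eq_zero htri

lemma even_ncard_of_isCocircuit [M.Finite] (hφ : IsRep (ZMod 2) M φ)
    (hsum : ∑ e ∈ M.ground_finite.toFinset, φ e = 0) (hK : M.IsCocircuit K) : Even K.ncard := by
  classical
  obtain ⟨x, hx⟩ := hK.nonempty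
  have hKE := hK.subset_ground
  set F := {e ∈ M.ground_finite.toFinset | e ∈ K}
  have hF : (F : Set α) = K := by
    ext e
    simpa [F] using fun he ↦ hKE he
  have hsumK : ∑ e ∈ F, φ e ∈ span (ZMod 2) (φ '' (M.E \ K)) := by
    rw [← Finset.sum_filter_add_sum_filter_not _ (· ∈ K)] at hsum
    rw [eq_neg_of_add_eq_zero_left hsum]
    exact neg_mem (sum_mem fun e he ↦ subset_span (mem_image_of_mem φ (by simpa using he)))
  have hdiff : ∑ e ∈ F, (φ e - φ x) ∈ span (ZMod 2) (φ '' (M.E \ K)) :=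
    sum_mem fun e he ↦ hφ.sub_mem_span_compl hK hx (Finset.mem_filter.1 he).2
  rw [Finset.sum_sub_distrib, Finset.sum_const] at hdiff
  have hcard : (K.ncard : ZMod 2) • φ x ∈ span (ZMod 2) (φ '' (M.E \ K)) := by
    rw [Nat.cast_smul_eq_nsmul, show K.ncard = F.card by rw [← hF, ncard_coe_finset]]
    simpa using sub_mem hsumK hdiff
  refine ZMod.natCast_eq_zero_iff_even.1 (by_contra fun hodd ↦ hK.notMem_closure_compl hx
    ((hφ.mem_closure_iff sdiff_subset (hKE hx)).2 ?_))
  rwa [(ZMod.natCast_ne_zero_iff_odd.1 hodd).natCast_zmod_two, one_smul] at hcard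

lemma four_le_encard_of_isCocircuit (hφ : IsRep (ZMod 2) M φ) (hinj : InjOn φ M.E)
    (h3 : EveryElementInThreeTriangles M) (hK : M.IsCocircuit K) : 4 ≤ K.encard := by
  obtain ⟨e, he⟩ := hK.nonempty
  obtain ⟨T₁, T₂, T₃, h₁₂, h₁₃, h₂₃, hT⟩ := encard_eq_three.1 (h3 e (hK.subset_ground he))
  have hmem : ∀ T ∈ ({T₁, T₂, T₃} : Set (Set α)), IsTriangle M T ∧ e ∈ T :=
    fun T h ↦ (hT ▸ h : T ∈ {T | IsTriangle M T ∧ e ∈ T})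
  have hpartner : ∀ T ∈ ({T₁, T₂, T₃} : Set (Set α)), ∃ p ∈ T ∩ K, p ≠ e := by
    intro T hT
    by_contra! h
    exact (circuit_iff_isCircuit.1 (hmem T hT).1.1).inter_isCocircuit_ne_singleton hK
      (Subset.antisymm (fun p hp ↦ h p hp) (singleton_subset_iff.2 ⟨(hmem T hT).2, he⟩))
  have hne : ∀ {T T' p p'}, T ∈ ({T₁, T₂, T₃} : Set (Set α)) → T' ∈ ({T₁, T₂, T₃} : Set _) →
      p ∈ T ∩ K → p' ∈ T' ∩ K → p ≠ e → T ≠ T' → p ≠ p' := by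
    rintro T T' p p' hT hT' hp hp' hpe hTT' rfl
    exact hTT' (hφ.eq_of_isTriangle hinj (hmem T hT).1 (hmem T' hT').1 (hmem T hT).2 hp.1
      (hmem T' hT').2 hp'.1 hpe.symm)
  obtain ⟨p₁, hp₁, hp₁e⟩ := hpartner T₁ (by simp)
  obtain ⟨p₂, hp₂, hp₂e⟩ := hpartner T₂ (by simp)
  obtain ⟨p₃, hp₃, hp₃e⟩ := hpartner T₃ (by simp)
  have h₁₂' := hne (by simp) (by simp) hp₁ hp₂ hp₁e h₁₂
  have h₁₃' := hne (by simp) (by simp) hp₁ hp₃ hp₁e h₁₃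
  have h₂₃' := hne (by simp) (by simp) hp₂ hp₃ hp₂e h₂₃
  calc (4 : ℕ∞) = ({e, p₁, p₂, p₃} : Set α).encard := by
        rw [encard_insert_of_notMem (by simp [hp₁e.symm, hp₂e.symm, hp₃e.symm]),
          encard_insert_of_notMem (by simp [h₁₂', h₁₃']), encard_pair h₂₃']
        rfl
    _ ≤ K.encard := encard_mono (by simp [insert_subset_iff, he, hp₁.2, hp₂.2, hp₃.2])

lemma six_le_encard_of_isCocircuit [M.Finite] (hφ : IsRep (ZMod 2) M φ) (hinj : InjOn φ M.E)
    (h3 : EveryElementInThreeTriangles M) (hno4 : ¬ ∃ C, Cocircuit M C ∧ C.encard = 4)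
    (hK : M.IsCocircuit K) : 6 ≤ K.encard := by
  have h4 := hφ.four_le_encard_of_isCocircuit hinj h3 hK
  have hne : K.encard ≠ 4 := fun h ↦ hno4 ⟨K, cocircuit_iff_isCocircuit.2 hK, h⟩
  obtain ⟨k, hk⟩ := hφ.even_ncard_of_isCocircuit (hφ.sum_ground_eq_zero h3) hK
  rw [← (M.ground_finite.subset hK.subset_ground).cast_ncard_eq, hk] at h4 hne ⊢
  norm_cast at h4 hne ⊢
  omega

lemma encard_compl_le_five [M.RankFinite] (hφ : IsRep (ZMod 2) M φ) (hinj : InjOn φ M.E)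
    (hZ : M.IsFlat Z) (hx : x ∈ M✶.closure Z \ Z) (hZx : M.closure (insert x Z) = M.E)
    (hrk : M.eRk Z + M.eRk (M.E \ Z) ≤ M.eRank + 3) : (M.E \ Z).encard ≤ 5 := by
  have hxE : x ∈ M.E := M✶.closure_subset_ground Z hx.1
  have hW : M.E \ Z = insert x (M.E \ insert x Z) := by
    ext y
    by_cases hyx : y = x <;> simp_all
  have hrM : M.eRank = M.eRk Z + 1 := by
    rw [← eRk_ground, ← hZx, eRk_closure_eq, eRk_insert_eq_add_one ⟨hxE, hZ.closure.symm ▸ hx.2⟩]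
  rw [hW, eRk_insert_eq_add_one ⟨hxE, notMem_closure_compl_insert_of_mem_dual_closure hx.1 hx.2⟩,
    hrM, add_comm _ 1, ← add_assoc] at hrk
  have htop : M.eRk Z + 1 ≠ ⊤ := hrM ▸ (eRank_ne_top_iff M).2 ‹_›
  have hcount := hφ.two_mul_encard_le_two_pow hinj (n := 3) hZ.subset_ground hxE
    (by rw [hZx]; exact sdiff_subset)
    (hZ.closure.symm ▸ disjoint_sdiff_left.mono_right (subset_insert x Z))
    ((ENat.add_le_add_iff_left htop).1 hrk)
  rw [hW, encard_insert_of_notMem fun h ↦ h.2 (mem_insert x Z)]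
  generalize (M.E \ insert x Z).encard = d at hcount ⊢
  induction d using ENat.recTopCoe with
  | top => simp at hcount
  | coe d =>
    norm_cast at hcount ⊢
    omega

lemma spanning_of_ground_subset_fcl [M.Finite] (hφ : IsRep (ZMod 2) M φ) (hinj : InjOn φ M.E)
    (h6 : ∀ K, M.IsCocircuit K → 6 ≤ K.encard) (hY : Y ⊆ M.E)
    (hYc : M.eRk Y + M.eRk (M.E \ Y) ≤ M.eRank + 3) (hfcl : M.E ⊆ fcl M Y) : M.Spanning Y := by
  rw [spanning_iff_closure_eq]
  by_contra hne
  obtain ⟨Z, x, hZ, hx, hZx, hZc⟩ := exists_isFlat_closure_insert_eq_ground hY hYc hne hfcl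
  have hZE : ¬ M.Coindep (M.E \ Z) := by
    rw [coindep_iff_closure_compl_eq_ground, sdiff_sdiff_cancel_left hZ.subset_ground, hZ.closure]
    exact fun h ↦ hx.2 (h ▸ M✶.closure_subset_ground Z hx.1)
  obtain ⟨K, hKZ, hK⟩ := (show M✶.Dep (M.E \ Z) from ⟨hZE, sdiff_subset⟩).exists_isCircuit_subset
  have h6le := ((h6 K hK).trans (encard_mono hKZ)).trans
    (hφ.encard_compl_le_five hinj hZ hx hZx hZc)
  norm_num at h6le

end Binary

end IsRep

theorem stmt7 (M : Matroid α) (hI4 : InternallyFourConnected M) (hB : Binary M)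
    (h3 : EveryElementInThreeTriangles M) (hE : (14 : ℕ∞) ≤ M.E.encard)
    (hno4 : ¬ ∃ C, Cocircuit M C ∧ C.encard = 4)
    (X Y : Set α) (hsep : IsExact4Separation M X Y) (hXfcl : X ⊆ fcl M Y) :
    M✶.Indep X ∧ eRank M X = 3 ∧ X ⊆ M.closure Y := by
  obtain ⟨hdisj, hunion, hrk, hX4, hY4⟩ := hsep
  have hYE : Y ⊆ M.E := hunion ▸ subset_union_right
  have hXY : X = M.E \ Y := by rw [← hunion, union_sdiff_right, hdisj.sdiff_eq_left]
  simp only [eRank_eq_eRk, eRk_eq_matroid_eRank] at hrk ⊢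
  have : M.RankFinite :=
    hI4.1.rankFinite hYE (le_trans (by norm_num) hY4) (hXY ▸ le_trans (by norm_num) hX4)
  obtain ⟨φ, hφ⟩ := hB
  replace hφ : IsRep (ZMod 2) M φ := hφ
  have hinj : InjOn φ M.E :=
    hφ.injOn fun e he f hf ↦ hI4.1.indep_pair (le_trans (by norm_num) hE) he hf
  have : M.Finite := ⟨hφ.finite_ground hinj⟩
  have hYsp : M.Spanning Y := by
    refine hφ.spanning_of_ground_subset_fcl hinj
      (fun K ↦ hφ.six_le_encard_of_isCocircuit hinj h3 hno4) hYE (by rw [← hXY, add_comm, hrk])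
      (hunion ▸ union_subset hXfcl fun y hy ↦ mem_sInter.2 fun F hF ↦ hF.1 hy)
  rw [hYsp.eRk_eq, add_comm] at hrk
  exact ⟨hXY ▸ hYsp.compl_coindep,
    WithTop.add_left_cancel ((eRank_ne_top_iff M).2 inferInstance) hrk,
    hYsp.closure_eq ▸ hXY ▸ sdiff_subset⟩

end Paper
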